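/- In the Orthogonal Greedy Algorithm with an M-coherent dictionary and mM ≤ 1/20, for any 1 ≤ l ≤ n ≤ 2m one has |d_n| ≤ |d_l| · exp(2.5mM), where d_k = ⟨f_{k−1}, g_k⟩. -/

import Mathlib

/-!
Write `f_{l-1} - f_{n-1} = ∑_{i<n} c_i g_i`. Because `f_{n-1} ⊥ g_j` for `j < n`, every
`⟨f_{l-1} - f_{n-1}, g_j⟩` equals `⟨f_{l-1}, g_j⟩`, which the greedy choice at step `l` bounds by
`|d_l|`. For an `M`-coherent system this controls the coefficients: `S = ∑ |c_i|` satisfies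
`S ≤ (n-1)|d_l| + (n-2) M S`, so `M S ≤ (20/9) mM |d_l|`. Finally
`d_n = ⟨f_{l-1}, g_n⟩ - ∑ c_i ⟨g_i, g_n⟩`, whence `|d_n| ≤ |d_l| (1 + 2.5 mM) ≤ |d_l| exp(2.5 mM)`.
-/

open RealInnerProductSpace Finset

section Coherent

variable {H : Type*} [NormedAddCommGroup H] [InnerProductSpace ℝ H]
  {ι : Type*} {s : Finset ι} {v : ι → H} {M : ℝ}

theorem abs_inner_sum_smul_le (c : ι → ℝ) {w : H} (h : ∀ i ∈ s, |⟪v i, w⟫| ≤ M) :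
    |⟪∑ i ∈ s, c i • v i, w⟫| ≤ M * ∑ i ∈ s, |c i| := by
  rw [sum_inner, mul_sum]
  refine (abs_sum_le_sum_abs _ _).trans (sum_le_sum fun i hi => ?_)
  rw [real_inner_smul_left, abs_mul, mul_comm M]
  exact mul_le_mul_of_nonneg_left (h i hi) (abs_nonneg _)

theorem sum_abs_coeff_le_of_coherent (c : ι → ℝ) {A : ℝ} (hv : ∀ i ∈ s, ‖v i‖ = 1)
    (hcoh : ∀ i ∈ s, ∀ j ∈ s, i ≠ j → |⟪v i, v j⟫| ≤ M)
    (hA : ∀ j ∈ s, |⟪∑ i ∈ s, c i • v i, v j⟫| ≤ A) :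
    ∑ i ∈ s, |c i| ≤ #s * A + M * (#s - 1) * ∑ i ∈ s, |c i| := by
  classical
  set S := ∑ i ∈ s, |c i|
  have hcoeff : ∀ j ∈ s, |c j| ≤ A + M * (S - |c j|) := by
    intro j hj
    have hsplit : ⟪∑ i ∈ s, c i • v i, v j⟫ = c j + ⟪∑ i ∈ s.erase j, c i • v i, v j⟫ := by
      rw [← add_sum_erase _ _ hj, inner_add_left, real_inner_smul_left,
        real_inner_self_eq_norm_sq, hv j hj, one_pow, mul_one]
    have hrest : |⟪∑ i ∈ s.erase j, c i • v i, v j⟫| ≤ M * (S - |c j|) :=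
      (abs_inner_sum_smul_le c fun i hi =>
        hcoh i (mem_of_mem_erase hi) j hj (ne_of_mem_erase hi)).trans_eq
        (by rw [sum_erase_eq_sub hj])
    calc |c j| = |⟪∑ i ∈ s, c i • v i, v j⟫ - ⟪∑ i ∈ s.erase j, c i • v i, v j⟫| := by
          rw [hsplit, add_sub_cancel_right]
      _ ≤ A + M * (S - |c j|) := (abs_sub _ _).trans (add_le_add (hA j hj) hrest)
  calc S ≤ ∑ j ∈ s, (A + M * (S - |c j|)) := sum_le_sum hcoeff
    _ = #s * A + M * (#s - 1) * S := by
      rw [sum_add_distrib, ← mul_sum, sum_sub_distrib, sum_const, sum_const, nsmul_eq_mul,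
        nsmul_eq_mul]
      ring

end Coherent

theorem exists_sub_eq_sum_smul {R H : Type*} [Ring R] [AddCommGroup H] [Module R H]
    {f g : ℕ → H} {a b : ℕ} (hab : a ≤ b) (ha : f 0 - f a ∈ Submodule.span R (g '' Set.Icc 1 a))
    (hb : f 0 - f b ∈ Submodule.span R (g '' Set.Icc 1 b)) :
    ∃ c : ℕ → R, f a - f b = ∑ i ∈ Icc 1 b, c i • g i := by
  have hmono : g '' Set.Icc 1 a ⊆ g '' Set.Icc 1 b :=
    Set.image_mono (Set.Icc_subset_Icc le_rfl hab)
  have hmem : f a - f b ∈ Submodule.span R (g '' ↑(Icc 1 b)) := by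
    rw [coe_Icc, ← sub_sub_sub_cancel_left (f b) (f a) (f 0)]
    exact sub_mem hb (Submodule.span_mono hmono ha)
  obtain ⟨c, hc⟩ := (Submodule.mem_span_image_finset_iff_exists_fun' R).mp hmem
  exact ⟨c, hc.symm⟩

theorem le_mul_exp_of_le_add_mul {A S M d : ℝ} {k m : ℕ} (hA : 0 ≤ A) (hM : 0 ≤ M)
    (hk : k ≤ 2 * m) (hmM : (m : ℝ) * M ≤ 1 / 20) (hS : S ≤ k * A + M * (k - 1) * S)
    (hd : d ≤ A + M * S) : d ≤ A * Real.exp (2.5 * m * M) := by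
  have hk' : (k : ℝ) ≤ 2 * m := by exact_mod_cast hk
  have hkM : M * (k - 1) ≤ 1 / 10 := by nlinarith
  have hMS : M * S ≤ 20 / 9 * (m * M) * A := by
    have hcontract : M * S * (1 - M * (k - 1)) ≤ M * k * A := by
      nlinarith [mul_le_mul_of_nonneg_left hS hM]
    have hkA : M * k * A ≤ 2 * (m * M) * A := by
      nlinarith [mul_le_mul_of_nonneg_right hk' (mul_nonneg hM hA)]
    rcases le_or_gt (M * S) 0 with hMS | hMS
    · nlinarith [mul_nonneg hM hA]
    · nlinarith
  have hexp : 1 + 2.5 * (m * M) ≤ Real.exp (2.5 * m * M) := by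
    linarith [Real.add_one_le_exp (2.5 * m * M)]
  have hmM0 : 0 ≤ (m : ℝ) * M := by positivity
  calc d ≤ A * (1 + 2.5 * (m * M)) := by nlinarith [mul_nonneg hmM0 hA]
    _ ≤ A * Real.exp (2.5 * m * M) := mul_le_mul_of_nonneg_left hexp hA

theorem oga_dn_exp_bound_general {H : Type*} [NormedAddCommGroup H] [InnerProductSpace ℝ H]
    (D : Set H) (M : ℝ) (m : ℕ)
    (hDnorm : ∀ φ ∈ D, ‖φ‖ = 1)
    (hcoh : ∀ φ ∈ D, ∀ ψ ∈ D, φ ≠ ψ → |⟪φ, ψ⟫| ≤ M)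
    (hmM : (m : ℝ) * M ≤ 1 / 20)
    (l n : ℕ) (hl : 1 ≤ l) (hln : l ≤ n) (hn2m : n ≤ 2 * m)
    (fres : ℕ → H) (g : ℕ → H)
    (hgD : ∀ k, 1 ≤ k → k ≤ 2 * m → g k ∈ D)
    (hgdist : ∀ i j, 1 ≤ i → i ≤ 2 * m → 1 ≤ j → j ≤ 2 * m → g i = g j → i = j)
    (hgreedy : ∀ k, k < 2 * m → ∀ φ ∈ D, |⟪fres k, φ⟫| ≤ |⟪fres k, g (k + 1)⟫|)
    (hres_span : ∀ k, k ≤ 2 * m → fres 0 - fres k ∈ Submodule.span ℝ (g '' Set.Icc 1 k))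
    (hres_orth : ∀ k, k ≤ 2 * m → ∀ i, 1 ≤ i → i ≤ k → ⟪fres k, g i⟫ = 0) :
    |⟪fres (n - 1), g n⟫| ≤ |⟪fres (l - 1), g l⟫| * Real.exp (2.5 * m * M) := by
  have hgcoh : ∀ i j, 1 ≤ i → i ≤ 2 * m → 1 ≤ j → j ≤ 2 * m → i ≠ j → |⟪g i, g j⟫| ≤ M :=
    fun i j hi hi' hj hj' hne =>
      hcoh _ (hgD i hi hi') _ (hgD j hj hj') fun h => hne (hgdist i j hi hi' hj hj' h)
  have hM : 0 ≤ M :=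
    (abs_nonneg _).trans (hgcoh 1 2 le_rfl (by omega) (by omega) (by omega) (by omega))
  have hgreedy_l : ∀ φ ∈ D, |⟪fres (l - 1), φ⟫| ≤ |⟪fres (l - 1), g l⟫| := by
    simpa only [Nat.sub_add_cancel hl] using hgreedy (l - 1) (by omega)
  obtain ⟨c, hc⟩ := exists_sub_eq_sum_smul (g := g) (Nat.sub_le_sub_right hln 1)
    (hres_span (l - 1) (by omega)) (hres_span (n - 1) (by omega))
  set p := ∑ i ∈ Icc 1 (n - 1), c i • g i
  have hp : ∀ j ∈ Icc 1 (n - 1), |⟪p, g j⟫| ≤ |⟪fres (l - 1), g l⟫| := by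
    intro j hj
    obtain ⟨hj1, hj2⟩ := mem_Icc.mp hj
    rw [← hc, inner_sub_left, hres_orth (n - 1) (by omega) j hj1 hj2, sub_zero]
    exact hgreedy_l _ (hgD j hj1 (by omega))
  have hS := sum_abs_coeff_le_of_coherent c
    (fun i hi => hDnorm _ (hgD i (mem_Icc.mp hi).1 (by grind)))
    (fun i hi j hj => hgcoh i j (mem_Icc.mp hi).1 (by grind) (mem_Icc.mp hj).1 (by grind)) hp
  rw [Nat.card_Icc, Nat.add_sub_cancel] at hS
  have hdn : |⟪fres (n - 1), g n⟫| ≤ |⟪fres (l - 1), g l⟫| + M * ∑ i ∈ Icc 1 (n - 1), |c i| := by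
    rw [show fres (n - 1) = fres (l - 1) - p by rw [← hc, sub_sub_cancel], inner_sub_left]
    refine (abs_sub _ _).trans (add_le_add (hgreedy_l _ (hgD n (by omega) hn2m)) ?_)
    exact abs_inner_sum_smul_le c fun i hi =>
      hgcoh i n (mem_Icc.mp hi).1 (by grind) (by omega) hn2m (by grind)
  exact le_mul_exp_of_le_add_mul (abs_nonneg _) hM (by omega) hmM hS hdn

/-- In OGA with an `M`-coherent dictionary and `mM ≤ 1/20`, for `1 ≤ l ≤ n ≤ 2m` one has
`|d_n| ≤ |d_l| exp(2.5 mM)` where `d_k = ⟨f_{k-1}, g_k⟩`. -/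
theorem oga_dn_exp_bound {H : Type*} [NormedAddCommGroup H] [InnerProductSpace ℝ H]
    [CompleteSpace H]
    (D : Set H) (M : ℝ) (m : ℕ)
    (hDnorm : ∀ φ ∈ D, ‖φ‖ = 1)
    (hcoh : ∀ φ ∈ D, ∀ ψ ∈ D, φ ≠ ψ → |⟪φ, ψ⟫| ≤ M)
    (hm : 1 ≤ m) (hmM : (m : ℝ) * M ≤ 1 / 20)
    (l n : ℕ) (hl : 1 ≤ l) (hln : l ≤ n) (hn2m : n ≤ 2 * m)
    (fres : ℕ → H) (g : ℕ → H)
    (hgD : ∀ k, 1 ≤ k → k ≤ 2 * m → g k ∈ D)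
    (hgdist : ∀ i j, 1 ≤ i → i ≤ 2 * m → 1 ≤ j → j ≤ 2 * m → g i = g j → i = j)
    (hgreedy : ∀ k, k < 2 * m → ∀ φ ∈ D, |⟪fres k, φ⟫| ≤ |⟪fres k, g (k + 1)⟫|)
    (hres_span : ∀ k, k ≤ 2 * m → fres 0 - fres k ∈ Submodule.span ℝ (g '' Set.Icc 1 k))
    (hres_orth : ∀ k, k ≤ 2 * m → ∀ i, 1 ≤ i → i ≤ k → ⟪fres k, g i⟫ = 0) :
    |⟪fres (n - 1), g n⟫| ≤ |⟪fres (l - 1), g l⟫| * Real.exp (2.5 * m * M) :=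
  oga_dn_exp_bound_general D M m hDnorm hcoh hmM l n hl hln hn2m fres g hgD hgdist hgreedy hres_span
    hres_orth
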